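/- arXiv:2505.02386 — 2 statements merged into one kernel-verified Lean document; each statement's English description precedes it below -/
import Mathlib

section
/- Any triangulation of the closed orientable genus 2 surface that admits a simplicial map of degree 2 onto the 7-vertex triangulation of the torus has at least 13 vertices. -/
/-!
A combinatorial model of (coherently oriented) triangulations of closed
orientable surfaces.  A triangulation is recorded by its set `F` of *oriented*
facets: ordered triples of distinct vertices, closed under cyclic rotation,
such that every directed edge lies in exactly one oriented facet (this is
exactly a coherent orientation of a closed triangulated surface), with no
isolated vertices, connected, and with connected vertex links (so the
underlying polyhedron is a closed surface).
-/
structure OSurf (V : Type) [DecidableEq V] [Fintype V] : Type where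
  F : Finset (V × V × V)
  rot_mem : ∀ a b c, (a, b, c) ∈ F → (b, c, a) ∈ F
  nondegen : ∀ a b c, (a, b, c) ∈ F → a ≠ b ∧ b ≠ c ∧ a ≠ c
  dart_unique : ∀ a b c c', (a, b, c) ∈ F → (a, b, c') ∈ F → c = c'
  dart_rev : ∀ a b c, (a, b, c) ∈ F → ∃ c', (b, a, c') ∈ F
  vertex_cover : ∀ v : V, ∃ b c, (v, b, c) ∈ F
  connected : ∀ x ∈ F, ∀ y ∈ F,
    Relation.ReflTransGen (fun s t : V × V × V => s ∈ F ∧ t ∈ F ∧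
      2 ≤ (({s.1, s.2.1, s.2.2} : Finset V) ∩ {t.1, t.2.1, t.2.2}).card) x y
  link_connected : ∀ v : V, ∀ x ∈ F, ∀ y ∈ F,
    v ∈ ({x.1, x.2.1, x.2.2} : Finset V) → v ∈ ({y.1, y.2.1, y.2.2} : Finset V) →
    Relation.ReflTransGen (fun s t : V × V × V => s ∈ F ∧ t ∈ F ∧
      v ∈ ({s.1, s.2.1, s.2.2} : Finset V) ∧ v ∈ ({t.1, t.2.1, t.2.2} : Finset V) ∧
      2 ≤ (({s.1, s.2.1, s.2.2} : Finset V) ∩ {t.1, t.2.1, t.2.2}).card) x y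

variable {V W : Type} [DecidableEq V] [Fintype V] [DecidableEq W] [Fintype W]

/-- The (unoriented) triangles of the triangulation. -/
def OSurf.faces (K : OSurf V) : Finset (Finset V) :=
  K.F.image fun x => {x.1, x.2.1, x.2.2}

/-- The edges of the triangulation. -/
def OSurf.edges (K : OSurf V) : Finset (Finset V) :=
  K.faces.biUnion fun t => Finset.powersetCard 2 t

/-- `K` triangulates the closed orientable surface of genus `g`, recorded via the
Euler characteristic `n - e + f = 2 - 2g`. -/
def OSurf.genusIs (K : OSurf V) (g : ℕ) : Prop :=
  (Fintype.card V : ℤ) - K.edges.card + K.faces.card = 2 - 2 * g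

/-- `φ` is a simplicial map from `K` to `L`: the image of every face of `K` is a
face of `L` (possibly of lower dimension). -/
def IsSimplicialMap (K : OSurf V) (L : OSurf W) (φ : V → W) : Prop :=
  ∀ x ∈ K.F, ∃ t ∈ L.faces, ({φ x.1, φ x.2.1, φ x.2.2} : Finset W) ⊆ t

/-- `φ : K → L` has degree `d`: for every oriented facet `σ` of `L`, the number of
facets of `K` mapped onto `σ` preserving orientation minus the number mapped onto
`σ` reversing orientation equals `d` (the algebraic count `alg σ`, which computes
the homological degree `f₂([K]) = d·[L]`). -/
def HasDegree (K : OSurf V) (L : OSurf W) (φ : V → W) (d : ℤ) : Prop :=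
  ∀ p q r, (p, q, r) ∈ L.F →
    ((K.F.filter fun x => (φ x.1, φ x.2.1, φ x.2.2) = (p, q, r)).card : ℤ) -
      ((K.F.filter fun x => (φ x.1, φ x.2.1, φ x.2.2) = (p, r, q)).card : ℤ) = d

/-- The coherently oriented facets of the unique `7`-vertex triangulation of the
torus (vertices `1,…,7`, where `7 = 0` in `Fin 7`): the `14` facets
`124, 245, 235, 356, 156, 126, 267, 237, 137, 157, 457, 467, 346, 134`,
each taken with its coherent orientation (with `[1,2,4]` positively oriented),
closed under cyclic rotation. -/
def torusPos : Finset (Fin 7 × Fin 7 × Fin 7) :=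
  {(1,2,4), (2,3,5), (3,4,6), (4,5,7), (5,6,1), (6,7,2), (7,1,3),
   (1,4,3), (2,5,4), (3,6,5), (4,7,6), (5,1,7), (6,2,1), (7,3,2)}

def torusF : Finset (Fin 7 × Fin 7 × Fin 7) :=
  torusPos ∪ torusPos.image (fun x => (x.2.1, x.2.2, x.1)) ∪
    torusPos.image (fun x => (x.2.2, x.1, x.2.1))


set_option maxRecDepth 10000

noncomputable def OSurf.third (K : OSurf V) (a b : V) : V :=
  if h : ∃ c, (a, b, c) ∈ K.F then h.choose else a

lemma OSurf.third_eq (K : OSurf V) {a b c : V} (h : (a, b, c) ∈ K.F) : K.third a b = c := by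
  have hex : ∃ c, (a, b, c) ∈ K.F := ⟨c, h⟩
  rw [OSurf.third, dif_pos hex]
  exact K.dart_unique a b _ c hex.choose_spec h

-- edge of a facet is an edge
lemma edge_mem (K : OSurf V) {x : V × V × V} (hx : x ∈ K.F) :
    ({x.1, x.2.1} : Finset V) ∈ K.edges := by
  obtain ⟨a, b, c⟩ := x
  have hne := K.nondegen a b c hx
  refine Finset.mem_biUnion.mpr ⟨{a, b, c}, Finset.mem_image_of_mem _ hx, ?_⟩
  refine Finset.mem_powersetCard.mpr ⟨?_, ?_⟩
  · intro z hz
    simp only [Finset.mem_insert, Finset.mem_singleton] at hz ⊢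
    tauto
  · rw [Finset.card_insert_of_notMem (by simp [hne.1]), Finset.card_singleton]

-- |K.F| <= 2 * edges
lemma card_F_le (K : OSurf V) : K.F.card ≤ 2 * K.edges.card := by
  have hmaps : ∀ x ∈ K.F, ({x.1, x.2.1} : Finset V) ∈ K.edges := fun x hx => edge_mem K hx
  rw [Finset.card_eq_sum_card_fiberwise hmaps]
  have : ∀ t ∈ K.edges, (K.F.filter fun x => ({x.1, x.2.1} : Finset V) = t).card ≤ 2 := by
    intro t ht
    set s := K.F.filter fun x => ({x.1, x.2.1} : Finset V) = t with hs
    rcases s.eq_empty_or_nonempty with h | ⟨x0, hx0⟩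
    · simp [h]
    · obtain ⟨hx0F, hx0t⟩ := Finset.mem_filter.mp hx0
      obtain ⟨a, b, c⟩ := x0
      have hab : a ≠ b := (K.nondegen a b c hx0F).1
      have hsub : s ⊆ {(a, b, K.third a b), (b, a, K.third b a)} := by
        intro x hx
        obtain ⟨hxF, hxt⟩ := Finset.mem_filter.mp hx
        obtain ⟨p, q, r⟩ := x
        simp only at hxt hx0t
        rw [← hx0t] at hxt
        have hpq : p ≠ q := (K.nondegen p q r hxF).1
        have hp : p ∈ ({a, b} : Finset V) := hxt ▸ Finset.mem_insert_self p {q}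
        have hq : q ∈ ({a, b} : Finset V) := hxt ▸ (by simp)
        simp only [Finset.mem_insert, Finset.mem_singleton] at hp hq
        rcases hp with hp | hp <;> rcases hq with hq | hq
        · exact absurd (hp.trans hq.symm) hpq
        · subst hp; subst hq
          simp [K.third_eq hxF]
        · subst hp; subst hq
          simp [K.third_eq hxF]
        · exact absurd (hp.trans hq.symm) hpq
      calc s.card ≤ _ := Finset.card_le_card hsub
        _ ≤ 2 := Finset.card_insert_le _ _ |>.trans (by simp)
    
  calc ∑ t ∈ K.edges, (K.F.filter fun x => ({x.1, x.2.1} : Finset V) = t).card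
      ≤ ∑ _t ∈ K.edges, 2 := Finset.sum_le_sum this
    _ = 2 * K.edges.card := by rw [Finset.sum_const, smul_eq_mul, mul_comm]

-- 3 * faces <= |K.F|
lemma card_faces_le (K : OSurf V) : 3 * K.faces.card ≤ K.F.card := by
  have hmaps : ∀ x ∈ K.F, ({x.1, x.2.1, x.2.2} : Finset V) ∈ K.faces :=
    fun x hx => Finset.mem_image_of_mem _ hx
  rw [Finset.card_eq_sum_card_fiberwise hmaps]
  have h3 : ∀ t ∈ K.faces, 3 ≤ (K.F.filter fun x => ({x.1, x.2.1, x.2.2} : Finset V) = t).card := by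
    intro t ht
    obtain ⟨x0, hx0F, hx0t⟩ := Finset.mem_image.mp ht
    obtain ⟨a, b, c⟩ := x0
    have hne := K.nondegen a b c hx0F
    have h1 : (b, c, a) ∈ K.F := K.rot_mem a b c hx0F
    have h2 : (c, a, b) ∈ K.F := K.rot_mem b c a h1
    have m1 : (a,b,c) ∈ K.F.filter fun x => ({x.1, x.2.1, x.2.2} : Finset V) = t :=
      Finset.mem_filter.mpr ⟨hx0F, hx0t⟩
    have m2 : (b,c,a) ∈ K.F.filter fun x => ({x.1, x.2.1, x.2.2} : Finset V) = t := by
      refine Finset.mem_filter.mpr ⟨h1, ?_⟩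
      rw [← hx0t]; ext z
      simp only [Finset.mem_insert, Finset.mem_singleton]; tauto
    have m3 : (c,a,b) ∈ K.F.filter fun x => ({x.1, x.2.1, x.2.2} : Finset V) = t := by
      refine Finset.mem_filter.mpr ⟨h2, ?_⟩
      rw [← hx0t]; ext z
      simp only [Finset.mem_insert, Finset.mem_singleton]; tauto
    have hsub : ({(a,b,c), (b,c,a), (c,a,b)} : Finset (V×V×V)) ⊆
        K.F.filter fun x => ({x.1, x.2.1, x.2.2} : Finset V) = t := by
      intro x hx
      simp only [Finset.mem_insert, Finset.mem_singleton] at hx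
      rcases hx with h | h | h <;> subst h <;> assumption
    have hcard : ({(a,b,c), (b,c,a), (c,a,b)} : Finset (V×V×V)).card = 3 := by
      rw [Finset.card_insert_of_notMem, Finset.card_insert_of_notMem, Finset.card_singleton]
      · obtain ⟨g1, g2, g3⟩ := hne
        simp only [Finset.mem_singleton, Prod.mk.injEq]
        tauto
      · obtain ⟨g1, g2, g3⟩ := hne
        simp only [Finset.mem_insert, Finset.mem_singleton, Prod.mk.injEq]
        tauto
    calc 3 = _ := hcard.symm
      _ ≤ _ := Finset.card_le_card hsub
  calc 3 * K.faces.card = ∑ _t ∈ K.faces, 3 := by rw [Finset.sum_const, smul_eq_mul, mul_comm]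
    _ ≤ _ := Finset.sum_le_sum h3


lemma torus_card42 : torusF.card = 42 := by decide

lemma torus_char : ∀ z : Fin 7 × Fin 7 × Fin 7, z ∈ torusF →
    z.2.1 ≠ z.1 ∧ z.2.2 = z.1 + 3 * (z.2.1 - z.1) := by decide


/-- Any triangulation of the closed orientable genus `2` surface
admitting a simplicial map of degree `2` onto the `7`-vertex torus has at least
`13` vertices. -/
theorem stmt15 (K : OSurf V) (hK : K.genusIs 2)
    (T : OSurf (Fin 7)) (hT : T.F = torusF) (φ : V → Fin 7)
    (hsimp : IsSimplicialMap K T φ) (hdeg : HasDegree K T φ 2) :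
    13 ≤ Fintype.card V := by
  classical
  by_contra hcon
  push_neg at hcon
  -- Step A : counting forces all facets to map onto oriented torus facets,
  -- and `K` has at least 84 oriented facets.
  have him_count : 84 ≤ (K.F.filter fun x => (φ x.1, φ x.2.1, φ x.2.2) ∈ T.F).card := by
    set S := K.F.filter fun x => (φ x.1, φ x.2.1, φ x.2.2) ∈ T.F with hSdef
    have hmaps : ∀ x ∈ S, (φ x.1, φ x.2.1, φ x.2.2) ∈ T.F :=
      fun x hx => (Finset.mem_filter.mp hx).2
    rw [Finset.card_eq_sum_card_fiberwise hmaps]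
    have h2 : ∀ σ ∈ T.F, 2 ≤ (S.filter fun x => (φ x.1, φ x.2.1, φ x.2.2) = σ).card := by
      intro σ hσ
      obtain ⟨p, q, r⟩ := σ
      have hd := hdeg p q r hσ
      have hfil : (S.filter fun x => (φ x.1, φ x.2.1, φ x.2.2) = (p, q, r)) =
          K.F.filter fun x => (φ x.1, φ x.2.1, φ x.2.2) = (p, q, r) := by
        ext x
        simp only [hSdef, Finset.mem_filter, and_assoc]
        constructor
        · tauto
        · rintro ⟨h1, h2⟩
          exact ⟨h1, h2 ▸ hσ, h2⟩
      rw [hfil]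
      omega
    have hsum : ∑ _σ ∈ T.F, 2 ≤
        ∑ σ ∈ T.F, (S.filter fun x => (φ x.1, φ x.2.1, φ x.2.2) = σ).card :=
      Finset.sum_le_sum h2
    have hcard : T.F.card = 42 := by rw [hT]; exact torus_card42
    rw [Finset.sum_const, smul_eq_mul, hcard] at hsum
    omega
  have hsplit := Finset.card_filter_add_card_filter_not
    (s := K.F) (p := fun x => (φ x.1, φ x.2.1, φ x.2.2) ∈ T.F)
  have hF2e := card_F_le K
  have h3f := card_faces_le K
  have hEuler : (Fintype.card V : ℤ) - K.edges.card + K.faces.card = -2 := by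
    have := hK
    rw [OSurf.genusIs] at this
    omega
  have hD : (K.F.filter fun x => ¬((φ x.1, φ x.2.1, φ x.2.2) ∈ T.F)).card = 0 := by omega
  have hIm : ∀ x ∈ K.F, (φ x.1, φ x.2.1, φ x.2.2) ∈ T.F := by
    intro x hx
    by_contra hnot
    have hmem : x ∈ K.F.filter fun x => ¬((φ x.1, φ x.2.1, φ x.2.2) ∈ T.F) :=
      Finset.mem_filter.mpr ⟨hx, hnot⟩
    rw [Finset.card_eq_zero] at hD
    rw [hD] at hmem
    exact absurd hmem (Finset.notMem_empty x)
  -- Step B : every vertex degree is a multiple of 6.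
  have hdeg6 : ∀ v : V, ∃ c, (K.F.filter fun x => x.1 = v).card = 6 * c := by
    intro v
    set w := φ v with hw
    set Kv := K.F.filter fun x => x.1 = v with hKv
    set m : Fin 7 → ℕ := fun q => (Kv.filter fun x => φ x.2.1 = q).card with hm
    have hsum : Kv.card = ∑ q : Fin 7, m q :=
      Finset.card_eq_sum_card_fiberwise (fun x _ => Finset.mem_univ _)
    have hle : ∀ q : Fin 7, m q ≤ m (w + 3 * (q - w)) := by
      intro q
      apply Finset.card_le_card_of_injOn (fun x => (v, x.2.2, K.third v x.2.2))
      · rintro ⟨a, b, c⟩ hx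
        have hx1 := Finset.mem_filter.mp hx
        have hx2 := Finset.mem_filter.mp hx1.1
        have hxF : (a, b, c) ∈ K.F := hx2.1
        have hav : a = v := hx2.2
        have hbq : φ b = q := hx1.2
        subst hav
        have hr1 : (b, c, a) ∈ K.F := K.rot_mem a b c hxF
        have hr2 : (c, a, b) ∈ K.F := K.rot_mem b c a hr1
        obtain ⟨z, hz⟩ := K.dart_rev c a b hr2
        have h3 : K.third a c = z := K.third_eq hz
        have hTmem := hIm (a, b, c) hxF
        rw [hT] at hTmem
        have hchar : φ c = φ a + 3 * (φ b - φ a) := (torus_char _ hTmem).2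
        refine Finset.mem_filter.mpr ⟨Finset.mem_filter.mpr ⟨?_, rfl⟩, ?_⟩
        · show (a, c, K.third a c) ∈ K.F
          rw [h3]; exact hz
        · show φ c = w + 3 * (q - w)
          rw [hchar, hbq, ← hw]
      · rintro ⟨a1, b1, c1⟩ h1 ⟨a2, b2, c2⟩ h2 heq
        have h1' := Finset.mem_filter.mp (Finset.mem_coe.mp h1)
        have h2' := Finset.mem_filter.mp (Finset.mem_coe.mp h2)
        have h1k := h1'.1
        have h2k := h2'.1
        rw [hKv] at h1k h2k
        have h1'' := Finset.mem_filter.mp h1k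
        have h2'' := Finset.mem_filter.mp h2k
        have ha1 : a1 = v := h1''.2
        have ha2 : a2 = v := h2''.2
        have hF1 : (a1, b1, c1) ∈ K.F := h1''.1
        have hF2 : (a2, b2, c2) ∈ K.F := h2''.1
        simp only [Prod.mk.injEq] at heq
        have hc : c1 = c2 := heq.2.1
        have hrr1 : (c1, a1, b1) ∈ K.F := K.rot_mem b1 c1 a1 (K.rot_mem a1 b1 c1 hF1)
        have hrr2 : (c2, a2, b2) ∈ K.F := K.rot_mem b2 c2 a2 (K.rot_mem a2 b2 c2 hF2)
        rw [hc, ha1] at hrr1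
        rw [ha2] at hrr2
        have hb : b1 = b2 := K.dart_unique c2 v b1 b2 hrr1 hrr2
        simp [ha1, ha2, hb, hc, Prod.ext_iff]
    have hbij : Function.Bijective (fun q : Fin 7 => w + 3 * (q - w)) := by
      refine Finite.injective_iff_bijective.mp ?_
      intro a b hab
      simp only at hab
      have h2 : (3 : Fin 7) * (a - w) = 3 * (b - w) := add_left_cancel hab
      have h5 := congrArg (fun t => (5 : Fin 7) * t) h2
      simp only [← mul_assoc] at h5
      have h15 : (5 : Fin 7) * 3 = 1 := by decide
      rw [h15, one_mul, one_mul] at h5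
      have := congrArg (fun t => t + w) h5
      simpa [sub_add_cancel] using this
    have hsum2 : ∑ q : Fin 7, m (w + 3 * (q - w)) = ∑ q : Fin 7, m q :=
      Fintype.sum_bijective _ hbij _ _ (fun x => rfl)
    have heqq : ∀ q : Fin 7, m q = m (w + 3 * (q - w)) := by
      have h := (Finset.sum_eq_sum_iff_of_le (fun i _ => hle i)).mp hsum2.symm
      exact fun q => h q (Finset.mem_univ q)
    have key : ∀ d : Fin 7, m (w + d) = m (w + 3 * d) := by
      intro d
      have := heqq (w + d)
      rwa [add_sub_cancel_left] at this
    have h0 : m (w + 0) = 0 := by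
      rw [add_zero]
      refine Finset.card_eq_zero.mpr (Finset.filter_eq_empty_iff.mpr ?_)
      intro x hx
      rw [hKv] at hx
      have hx2 := Finset.mem_filter.mp hx
      have hxF : x ∈ K.F := hx2.1
      have hx1 : x.1 = v := hx2.2
      have hch : φ x.2.1 ≠ φ x.1 := (torus_char _ (by rw [← hT]; exact hIm x hxF)).1
      rw [hx1, ← hw] at hch
      exact hch
    have k1 := key 1
    have k3 := key 3
    have k2 := key 2
    have k6 := key 6
    have k4 := key 4
    have e1 : (3 * 1 : Fin 7) = 3 := by decide
    have e3 : (3 * 3 : Fin 7) = 2 := by decide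
    have e2 : (3 * 2 : Fin 7) = 6 := by decide
    have e6 : (3 * 6 : Fin 7) = 4 := by decide
    have e4 : (3 * 4 : Fin 7) = 5 := by decide
    rw [e1] at k1
    rw [e3] at k3
    rw [e2] at k2
    rw [e6] at k6
    rw [e4] at k4
    refine ⟨m (w + 1), ?_⟩
    have hre : ∑ q : Fin 7, m q = ∑ d : Fin 7, m (w + d) :=
      (Fintype.sum_equiv (Equiv.addLeft w) (fun d => m (w + d)) m (fun d => rfl)).symm
    rw [hsum, hre, Fin.sum_univ_seven, h0, ← k1, ← k3, ← k2, ← k6, ← k4]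
    omega
  -- Step C : degree bounds give the contradiction.
  have hub : ∀ v : V, (K.F.filter fun x => x.1 = v).card + 1 ≤ Fintype.card V := by
    intro v
    have hcl : (K.F.filter fun x => x.1 = v).card ≤ (Finset.univ.erase v).card := by
      apply Finset.card_le_card_of_injOn (fun x => x.2.1)
      · rintro ⟨a, b, c⟩ hx
        have hx2 := Finset.mem_filter.mp hx
        have hav : a = v := hx2.2
        have hne := K.nondegen a b c hx2.1
        exact Finset.mem_erase.mpr ⟨by rw [← hav]; exact fun h => hne.1 h.symm, Finset.mem_univ _⟩
      · rintro ⟨a1, b1, c1⟩ h1 ⟨a2, b2, c2⟩ h2 heq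
        have h1' := Finset.mem_filter.mp (Finset.mem_coe.mp h1)
        have h2' := Finset.mem_filter.mp (Finset.mem_coe.mp h2)
        have ha1 : a1 = v := h1'.2
        have ha2 : a2 = v := h2'.2
        have hb : b1 = b2 := heq
        have hF1 : (a1, b1, c1) ∈ K.F := h1'.1
        have hF2 : (a2, b2, c2) ∈ K.F := h2'.1
        rw [ha1] at hF1
        rw [ha2, ← hb] at hF2
        have hc : c1 = c2 := K.dart_unique v b1 c1 c2 hF1 hF2
        simp [ha1, ha2, hb, hc, Prod.ext_iff]
    rw [Finset.card_erase_of_mem (Finset.mem_univ v), Finset.card_univ] at hcl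
    have hpos : 0 < Fintype.card V := Fintype.card_pos_iff.mpr ⟨v⟩
    omega
  have hlb : ∀ v : V, 1 ≤ (K.F.filter fun x => x.1 = v).card := by
    intro v
    obtain ⟨b, c, hbc⟩ := K.vertex_cover v
    exact Finset.card_pos.mpr ⟨(v, b, c), Finset.mem_filter.mpr ⟨hbc, rfl⟩⟩
  have hall6 : ∀ v : V, (K.F.filter fun x => x.1 = v).card = 6 := by
    intro v
    obtain ⟨c, hc⟩ := hdeg6 v
    have h1 := hub v
    have h2 := hlb v
    omega
  have htot : ∑ v : V, (K.F.filter fun x => x.1 = v).card = K.F.card :=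
    (Finset.card_eq_sum_card_fiberwise (fun x _ => Finset.mem_univ x.1)).symm
  have htot6 : K.F.card = 6 * Fintype.card V := by
    rw [← htot]
    rw [Finset.sum_congr rfl (fun v _ => hall6 v), Finset.sum_const, smul_eq_mul,
      Finset.card_univ, mul_comm]
  omega
end

section
/- There exists a simplicial map of degree 1 from the 10-vertex (minimal) triangulation of the closed orientable genus 2 surface onto the 7-vertex triangulation of the torus. -/
variable {V W : Type} [DecidableEq V] [Fintype V] [DecidableEq W] [Fintype W]

/-- The facets of the (minimal) `10`-vertex triangulation of the closed
orientable genus `2` surface (vertices `1,…,10`, with `10 = 0` in `Fin 10`). -/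
def genus2Faces : Finset (Finset (Fin 10)) :=
  {{1,2,3},{1,2,4},{1,3,5},{1,4,6},{1,5,7},{1,6,8},{1,7,8},{2,3,6},{2,4,8},
   {2,5,6},{2,5,9},{2,7,8},{2,7,10},{2,9,10},{3,5,10},{3,6,8},{3,8,9},
   {3,9,10},{4,6,10},{4,7,9},{4,7,10},{4,8,9},{5,6,10},{5,7,9}}

/-!
Everything reduces to finite checks on explicit data, evaluated by `decide` in the kernel. The
oriented facets of the genus-`2` surface are the cyclic rotations of `24` coherently oriented
triangles. Connectivity of the surface and of its vertex links only needs to be checked on these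
triangles, since every oriented facet has the same vertices as one of them, and a breadth-first
search certifies it. The degree is computed by counting, for each oriented torus triangle, the
facets mapped onto it with either orientation.
-/

open Finset Relation

section Reachability

variable {α : Type*} [DecidableEq α] (R : α → α → Prop) [DecidableRel R] (S : Finset α)

def reachWithin (x₀ : α) : ℕ → Finset α
  | 0 => {x₀}
  | n + 1 => (reachWithin x₀ n).biUnion fun s => insert s (S.filter (R s))

variable {R S}

theorem reachWithin_subset {x₀ : α} (hx₀ : x₀ ∈ S) : ∀ n, reachWithin R S x₀ n ⊆ S
  | 0 => singleton_subset_iff.2 hx₀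
  | n + 1 => biUnion_subset.2 fun _ hs =>
    insert_subset (reachWithin_subset hx₀ n hs) (filter_subset _ _)

theorem reflTransGen_of_mem_reachWithin {x₀ : α} (hx₀ : x₀ ∈ S) :
    ∀ {n y}, y ∈ reachWithin R S x₀ n →
      ReflTransGen (fun s t => s ∈ S ∧ t ∈ S ∧ R s t) x₀ y
  | 0, y, hy => by rw [mem_singleton.1 hy]
  | n + 1, y, hy => by
    obtain ⟨s, hs, hy⟩ := mem_biUnion.1 hy
    rcases mem_insert.1 hy with rfl | hy
    · exact reflTransGen_of_mem_reachWithin hx₀ hs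
    · obtain ⟨hyS, hsy⟩ := mem_filter.1 hy
      exact (reflTransGen_of_mem_reachWithin hx₀ hs).tail
        ⟨reachWithin_subset hx₀ n hs, hyS, hsy⟩

theorem reflTransGen_of_subset_reachWithin [Std.Symm R] {P S : Finset α} {x₀ : α} {n : ℕ}
    (hPS : P ⊆ S) (hS : ∀ x ∈ S, ∃ p ∈ P, R x p) (hx₀ : x₀ ∈ P)
    (hP : P ⊆ reachWithin R P x₀ n) :
    ∀ x ∈ S, ∀ y ∈ S, ReflTransGen (fun s t => s ∈ S ∧ t ∈ S ∧ R s t) x y := by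
  have : Std.Symm fun s t => s ∈ S ∧ t ∈ S ∧ R s t :=
    ⟨fun _ _ ⟨hs, ht, hst⟩ => ⟨ht, hs, Std.Symm.symm _ _ hst⟩⟩
  have hreach : ∀ x ∈ S, ReflTransGen (fun s t => s ∈ S ∧ t ∈ S ∧ R s t) x₀ x := by
    intro x hx
    obtain ⟨p, hp, hxp⟩ := hS x hx
    have hx₀p : ReflTransGen (fun s t => s ∈ S ∧ t ∈ S ∧ R s t) x₀ p :=
      ReflTransGen.mono (fun _ _ hst => ⟨hPS hst.1, hPS hst.2.1, hst.2.2⟩) _ _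
        (reflTransGen_of_mem_reachWithin hx₀ (hP hp))
    exact hx₀p.tail ⟨hPS hp, hx, Std.Symm.symm _ _ hxp⟩
  intro x hx y hy
  exact (Std.Symm.symm _ _ (hreach x hx)).trans (hreach y hy)

end Reachability

section Triangles

variable {α : Type*} [DecidableEq α]

abbrev verts (x : α × α × α) : Finset α := {x.1, x.2.1, x.2.2}

abbrev SharesEdge (s t : α × α × α) : Prop := 2 ≤ (verts s ∩ verts t).card

instance : Std.Symm (SharesEdge (α := α)) :=
  ⟨fun s t h => by rwa [SharesEdge, inter_comm]⟩

theorem sharesEdge_of_verts_eq {x y : α × α × α} (hx : x.1 ≠ x.2.1)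
    (hxy : verts x = verts y) : SharesEdge x y := by
  rw [SharesEdge, ← hxy, inter_self, ← card_pair hx]
  exact card_le_card (by simp [insert_subset_iff])

def cyclicClosure (P : Finset (α × α × α)) : Finset (α × α × α) :=
  P ∪ P.image (fun x => (x.2.1, x.2.2, x.1)) ∪ P.image (fun x => (x.2.2, x.1, x.2.1))

theorem subset_cyclicClosure (P : Finset (α × α × α)) : P ⊆ cyclicClosure P :=
  subset_union_left.trans subset_union_left

theorem rot_mem_cyclicClosure {P : Finset (α × α × α)} :
    ∀ x ∈ cyclicClosure P, (x.2.1, x.2.2, x.1) ∈ cyclicClosure P := by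
  simp only [cyclicClosure, mem_union, mem_image]
  rintro ⟨a, b, c⟩ ((h | ⟨⟨a', b', c'⟩, h, he⟩) | ⟨⟨a', b', c'⟩, h, he⟩) <;> simp_all

theorem exists_verts_eq_of_mem_cyclicClosure {P : Finset (α × α × α)} :
    ∀ x ∈ cyclicClosure P, ∃ p ∈ P, verts x = verts p := by
  simp only [cyclicClosure, mem_union, mem_image]
  rintro x ((h | ⟨p, h, rfl⟩) | ⟨p, h, rfl⟩)
  · exact ⟨x, h, rfl⟩
  all_goals
    refine ⟨p, h, ?_⟩
    ext
    simp only [mem_insert, mem_singleton]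
    tauto

end Triangles

/- The conditions are phrased through `filter`, `image` and `card` rather than bounded
quantifiers over finsets, because the kernel evaluates the former much faster. -/
def OSurf.ofCyclicClosure (P : Finset (V × V × V)) (n : ℕ)
    (nondegen : (cyclicClosure P).filter
      (fun x => x.1 = x.2.1 ∨ x.2.1 = x.2.2 ∨ x.1 = x.2.2) = ∅)
    (dart_injOn :
      ((cyclicClosure P).image fun x => (x.1, x.2.1)).card = (cyclicClosure P).card)
    (dart_rev : (cyclicClosure P).image (fun x => (x.2.1, x.1)) ⊆
      (cyclicClosure P).image (fun x => (x.1, x.2.1)))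
    (vertex_cover : (cyclicClosure P).image Prod.fst = univ)
    (connected : ∃ x₀ ∈ P, P ⊆ reachWithin SharesEdge P x₀ n)
    (link_connected : ∀ v : V, ∃ x₀ ∈ P.filter (v ∈ verts ·),
      P.filter (v ∈ verts ·) ⊆ reachWithin SharesEdge (P.filter (v ∈ verts ·)) x₀ n) :
    OSurf V where
  F := cyclicClosure P
  rot_mem _ _ _ h := rot_mem_cyclicClosure _ h
  nondegen _ _ _ h := by simpa using filter_eq_empty_iff.1 nondegen h
  dart_unique _ _ _ _ h h' := by
    have := card_image_iff.1 dart_injOn h h' rfl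
    simp_all
  dart_rev _ _ _ h := by
    obtain ⟨⟨b, a, c⟩, hy, he⟩ := mem_image.1 (dart_rev (mem_image_of_mem _ h))
    obtain ⟨rfl, rfl⟩ := Prod.mk.inj he
    exact ⟨c, hy⟩
  vertex_cover v := by
    obtain ⟨⟨v, b, c⟩, hx, rfl⟩ := mem_image.1 (vertex_cover ▸ mem_univ v)
    exact ⟨b, c, hx⟩
  connected := by
    obtain ⟨x₀, hx₀, hP⟩ := connected
    refine reflTransGen_of_subset_reachWithin (subset_cyclicClosure P) (fun x hx => ?_) hx₀ hP
    obtain ⟨p, hp, hxp⟩ := exists_verts_eq_of_mem_cyclicClosure x hx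
    exact ⟨p, hp,
      sharesEdge_of_verts_eq (fun h => filter_eq_empty_iff.1 nondegen hx (.inl h)) hxp⟩
  link_connected v x hx y hy hvx hvy := by
    obtain ⟨x₀, hx₀, hP⟩ := link_connected v
    have hlink : ∀ z ∈ (cyclicClosure P).filter (v ∈ verts ·),
        ∃ p ∈ P.filter (v ∈ verts ·), SharesEdge z p := by
      intro z hz
      obtain ⟨hz, hvz⟩ := mem_filter.1 hz
      obtain ⟨p, hp, hzp⟩ := exists_verts_eq_of_mem_cyclicClosure z hz
      exact ⟨p, mem_filter.2 ⟨hp, hzp ▸ hvz⟩,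
        sharesEdge_of_verts_eq (fun h => filter_eq_empty_iff.1 nondegen hz (.inl h)) hzp⟩
    refine ReflTransGen.mono ?_ _ _ (reflTransGen_of_subset_reachWithin
      (filter_subset_filter _ (subset_cyclicClosure P)) hlink hx₀ hP
      x (mem_filter.2 ⟨hx, hvx⟩) y (mem_filter.2 ⟨hy, hvy⟩))
    rintro s t ⟨hs, ht, hst⟩
    rw [mem_filter] at hs ht
    exact ⟨hs.1, ht.1, hs.2, ht.2, hst⟩

theorem isSimplicialMap_of_image_subset {K : OSurf V} {L : OSurf W} {φ : V → W}
    (h : K.F.image (fun x => ({φ x.1, φ x.2.1, φ x.2.2} : Finset W)) ⊆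
      L.faces.biUnion powerset) :
    IsSimplicialMap K L φ := by
  intro x hx
  obtain ⟨t, ht, hxt⟩ := mem_biUnion.1 (h (mem_image_of_mem _ hx))
  exact ⟨t, ht, mem_powerset.1 hxt⟩

def genus2Pos : Finset (Fin 10 × Fin 10 × Fin 10) :=
  {(1,2,3), (1,3,5), (1,4,2), (1,5,7), (1,6,4), (1,7,8), (1,8,6), (2,4,8),
   (2,5,6), (2,6,3), (2,7,10), (2,8,7), (2,9,5), (2,10,9), (3,6,8), (3,8,9),
   (3,9,10), (3,10,5), (4,6,10), (4,7,9), (4,9,8), (4,10,7), (5,9,7), (5,10,6)}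

/- `4` is the diameter of the adjacency graph of the triangles and of each vertex link. -/
def genus2 : OSurf (Fin 10) :=
  .ofCyclicClosure genus2Pos 4 (by decide +kernel) (by decide +kernel) (by decide +kernel)
    (by decide +kernel) (by decide +kernel) (by decide +kernel)

theorem genus2_faces : genus2.faces = genus2Faces := by
  decide +kernel

theorem genus2_genusIs : genus2.genusIs 2 := by
  rw [OSurf.genusIs, OSurf.edges, genus2_faces]
  decide +kernel

/- The images of the vertices `10 = 0, 1, …, 9`; the torus vertex `7` is `0 : Fin 7`. -/
def genus2ToTorus : Fin 10 → Fin 7 := ![6, 1, 2, 4, 6, 3, 5, 7, 7, 7]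

theorem isSimplicialMap_genus2ToTorus (T : OSurf (Fin 7)) (hT : T.F = torusF) :
    IsSimplicialMap genus2 T genus2ToTorus := by
  apply isSimplicialMap_of_image_subset
  rw [OSurf.faces, hT]
  decide +kernel

theorem hasDegree_genus2ToTorus (T : OSurf (Fin 7)) (hT : T.F = torusF) :
    HasDegree genus2 T genus2ToTorus 1 := by
  let φ := genus2ToTorus
  have hcount : torusF.filter (fun σ =>
      ((genus2.F.filter fun x => (φ x.1, φ x.2.1, φ x.2.2) = σ).card : ℤ) -
        ((genus2.F.filter fun x => (φ x.1, φ x.2.1, φ x.2.2) = (σ.1, σ.2.2, σ.2.1)).card : ℤ)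
          = 1) = torusF := by
    decide +kernel
  intro p q r hσ
  rw [hT] at hσ
  exact filter_eq_self.1 hcount _ hσ

/-- There is a simplicial map of degree `1` from the `10`-vertex
minimal triangulation of the genus `2` surface onto the `7`-vertex torus. -/
theorem stmt16 (T : OSurf (Fin 7)) (hT : T.F = torusF) :
    ∃ K : OSurf (Fin 10), K.faces = genus2Faces ∧ K.genusIs 2 ∧
      ∃ φ : Fin 10 → Fin 7, IsSimplicialMap K T φ ∧ HasDegree K T φ 1 :=
  ⟨genus2, genus2_faces, genus2_genusIs, genus2ToTorus,
    isSimplicialMap_genus2ToTorus T hT, hasDegree_genus2ToTorus T hT⟩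
end
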